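/- arXiv:2307.05635 — 2 statements merged into one kernel-verified Lean document; each statement's English description precedes it below -/
import Mathlib

section
/- Let Z be a standard Gaussian random variable and let φ : ℝ → ℝ be in C² with |φ''| ≤ K̄ for a constant K̄. Then for any real σ ≥ 0, |E[φ'(σZ)] - E[φ'(Z)]| ≤ K̄ |σ² - 1|. -/
open MeasureTheory ProbabilityTheory Real Set Filter Topology
open scoped ENNReal NNReal

-- transfer lemmas
lemma gauss_integral_eq (g : ℝ → ℝ) :
    ∫ z, g z ∂(gaussianReal 0 1) = ∫ x, gaussianPDFReal 0 1 x * g x := by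
  rw [gaussianReal_of_var_ne_zero 0 one_ne_zero]
  have : (gaussianPDF 0 1) = fun x => ((Real.toNNReal (gaussianPDFReal 0 1 x) : ℝ≥0) : ℝ≥0∞) := rfl
  rw [this, integral_withDensity_eq_integral_smul
    ((measurable_gaussianPDFReal 0 1).real_toNNReal)]
  congr 1
  ext x
  simp [NNReal.smul_def, Real.coe_toNNReal _ (gaussianPDFReal_nonneg 0 1 x)]

lemma gauss_integrable_iff (g : ℝ → ℝ) :
    Integrable g (gaussianReal 0 1) ↔ Integrable (fun x => gaussianPDFReal 0 1 x * g x) := by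
  rw [gaussianReal_of_var_ne_zero 0 one_ne_zero]
  have : (gaussianPDF 0 1) = fun x => ((Real.toNNReal (gaussianPDFReal 0 1 x) : ℝ≥0) : ℝ≥0∞) := rfl
  rw [this, integrable_withDensity_iff_integrable_smul
    ((measurable_gaussianPDFReal 0 1).real_toNNReal)]
  constructor <;> intro h <;> refine h.congr (Filter.Eventually.of_forall fun x => ?_) <;>
    simp [NNReal.smul_def, Real.coe_toNNReal _ (gaussianPDFReal_nonneg 0 1 x)]

lemma pdf_eq (x : ℝ) : gaussianPDFReal 0 1 x = (Real.sqrt (2 * π))⁻¹ * rexp (-x ^ 2 / 2) := by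
  simp [gaussianPDFReal]

lemma abs_exp_integrable : Integrable (fun x : ℝ => |x| * rexp (-x ^ 2 / 2)) := by
  have := (integrable_mul_exp_neg_mul_sq (b := 1/2) (by norm_num)).abs
  refine this.congr (Filter.Eventually.of_forall fun x => ?_)
  simp only [abs_mul, Real.abs_exp]
  ring_nf

lemma Ioi_integral : ∫ x in Ioi (0:ℝ), x * rexp (-x ^ 2 / 2) = 1 := by
  have hderiv : ∀ x ∈ Ici (0:ℝ), HasDerivAt (fun x => -rexp (-x ^ 2 / 2))
      (x * rexp (-x ^ 2 / 2)) x := by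
    intro x _
    have h1 : HasDerivAt (fun x : ℝ => -x ^ 2 / 2) (-x) x := by
      have := ((hasDerivAt_pow 2 x).neg.div_const 2)
      simpa using this.congr_deriv (by push_cast; ring)
    have := (h1.exp).neg
    simpa [mul_comm, Pi.neg_def] using this
  have hint : IntegrableOn (fun x => x * rexp (-x ^ 2 / 2)) (Ioi (0:ℝ)) := by
    refine ((integrable_mul_exp_neg_mul_sq (b := 1/2) (by norm_num)).congr
      (Filter.Eventually.of_forall fun x => by ring_nf)).integrableOn
  have htend : Tendsto (fun x : ℝ => -rexp (-x ^ 2 / 2)) atTop (𝓝 0) := by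
    have h2 : Tendsto (fun x : ℝ => -x ^ 2 / 2) atTop atBot := by
      apply Tendsto.atBot_div_const (by norm_num : (0:ℝ) < 2)
      exact tendsto_neg_atTop_atBot.comp (tendsto_pow_atTop two_ne_zero)
    have := (Real.tendsto_exp_atBot.comp h2).neg
    simpa using this
  have := integral_Ioi_of_hasDerivAt_of_tendsto' hderiv hint htend
  simpa using this

lemma gauss_abs_integrable : Integrable (fun z : ℝ => |z|) (gaussianReal 0 1) := by
  rw [gauss_integrable_iff]
  refine (abs_exp_integrable.const_mul ((Real.sqrt (2 * π))⁻¹)).congr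
    (Filter.Eventually.of_forall fun x => ?_)
  simp only [pdf_eq]; ring

lemma gauss_abs_le_one : ∫ z, |z| ∂(gaussianReal 0 1) ≤ 1 := by
  rw [gauss_integral_eq]
  have h1 : ∫ x, gaussianPDFReal 0 1 x * |x|
      = (Real.sqrt (2 * π))⁻¹ * ∫ x, |x| * rexp (-x ^ 2 / 2) := by
    have hx : ∀ x : ℝ, gaussianPDFReal 0 1 x * |x|
        = (Real.sqrt (2 * π))⁻¹ * (|x| * rexp (-x ^ 2 / 2)) := fun x => by rw [pdf_eq]; ring
    simp only [hx, integral_const_mul]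
  have h2 : ∫ x : ℝ, |x| * rexp (-x ^ 2 / 2) = 2 := by
    have := integral_comp_abs (f := fun x : ℝ => x * rexp (-x ^ 2 / 2))
    simp only [sq_abs] at this
    rw [this, Ioi_integral, mul_one]
  rw [h1, h2]
  have hs : (2:ℝ) ≤ Real.sqrt (2 * π) := by
    nlinarith [Real.sq_sqrt (show (0:ℝ) ≤ 2 * π by positivity),
      Real.sqrt_nonneg (2 * π), Real.pi_gt_three]
  have hpos : (0:ℝ) < Real.sqrt (2 * π) := by positivity
  rw [inv_mul_le_iff₀ hpos]
  linarith

/-- For a standard Gaussian `Z` and `φ ∈ C²` with `|φ''| ≤ K̄`,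
for any `σ ≥ 0`, `|E[φ'(σZ)] - E[φ'(Z)]| ≤ K̄ |σ² - 1|`. -/
theorem gaussian_deriv_variance_approx
    (φ φ' φ'' : ℝ → ℝ) (Kbar : ℝ)
    (hder1 : ∀ x, HasDerivAt φ (φ' x) x)
    (hder2 : ∀ x, HasDerivAt φ' (φ'' x) x)
    (hbd : ∀ x, |φ'' x| ≤ Kbar)
    (σ : ℝ) (hσ : 0 ≤ σ) :
    |(∫ z, φ' (σ * z) ∂(gaussianReal 0 1)) - ∫ z, φ' z ∂(gaussianReal 0 1)|
      ≤ Kbar * |σ ^ 2 - 1| := by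
  set γ := gaussianReal 0 1 with hγ
  have hK : 0 ≤ Kbar := (abs_nonneg _).trans (hbd 0)
  have hlip : ∀ x y : ℝ, |φ' x - φ' y| ≤ Kbar * |x - y| := by
    intro x y
    have := convex_univ.norm_image_sub_le_of_norm_hasDerivWithin_le
      (f := φ') (f' := φ'') (s := Set.univ) (C := Kbar)
      (fun z _ => (hder2 z).hasDerivWithinAt)
      (fun z _ => by simpa [Real.norm_eq_abs] using hbd z) (Set.mem_univ y) (Set.mem_univ x)
    simpa [Real.norm_eq_abs] using this
  have hc : Continuous φ' := by
    rw [continuous_iff_continuousAt]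
    exact fun x => (hder2 x).continuousAt
  have habs : Integrable (fun z : ℝ => |z|) γ := gauss_abs_integrable
  have hbound : ∀ c : ℝ, Integrable (fun z => φ' (c * z)) γ := by
    intro c
    refine ((integrable_const (|φ' 0|)).add (habs.const_mul (Kbar * |c|))).mono'
      ((hc.comp (continuous_const.mul continuous_id)).aestronglyMeasurable) ?_
    refine Filter.Eventually.of_forall fun z => ?_
    have h := hlip (c * z) 0
    have h2 : |φ' (c * z)| - |φ' 0| ≤ |φ' (c * z) - φ' 0| := abs_sub_abs_le_abs_sub _ _
    simp only [Real.norm_eq_abs]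
    have h3 : |c * z - 0| = |c| * |z| := by rw [sub_zero, abs_mul]
    rw [h3] at h
    calc |φ' (c * z)| ≤ |φ' 0| + Kbar * (|c| * |z|) := by linarith
      _ = |φ' 0| + Kbar * |c| * |z| := by ring
  have hI1 : Integrable (fun z => φ' (σ * z)) γ := hbound σ
  have hI0 : Integrable φ' γ := (hbound 1).congr (Filter.Eventually.of_forall fun z => by simp)
  rw [← integral_sub hI1 hI0]
  have hInn : 0 ≤ ∫ z, |z| ∂γ := integral_nonneg fun z => abs_nonneg z
  have hIle : ∫ z, |z| ∂γ ≤ 1 := gauss_abs_le_one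
  have hptwise : ∀ z : ℝ, |φ' (σ * z) - φ' z| ≤ Kbar * |σ - 1| * |z| := by
    intro z
    have h := hlip (σ * z) z
    have : |σ * z - z| = |σ - 1| * |z| := by rw [show σ * z - z = (σ - 1) * z by ring, abs_mul]
    rw [this] at h
    linarith [h]
  calc |∫ z, (φ' (σ * z) - φ' z) ∂γ| ≤ ∫ z, |φ' (σ * z) - φ' z| ∂γ := by
        simpa [Real.norm_eq_abs] using norm_integral_le_integral_norm (fun z => φ' (σ * z) - φ' z) (μ := γ)
    _ ≤ ∫ z, Kbar * |σ - 1| * |z| ∂γ := by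
        refine integral_mono (hI1.sub hI0).abs ((habs.const_mul _)) fun z => hptwise z
    _ = Kbar * |σ - 1| * ∫ z, |z| ∂γ := integral_const_mul _ _
    _ ≤ Kbar * |σ - 1| := by
        have h0 : 0 ≤ Kbar * |σ - 1| := mul_nonneg hK (abs_nonneg _)
        exact mul_le_of_le_one_right h0 hIle
    _ ≤ Kbar * |σ ^ 2 - 1| := by
        have h1 : |σ ^ 2 - 1| = |σ - 1| * (σ + 1) := by
          rw [show σ ^ 2 - 1 = (σ - 1) * (σ + 1) by ring, abs_mul,
            abs_of_nonneg (by linarith : (0:ℝ) ≤ σ + 1)]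
        rw [h1]
        nlinarith [mul_nonneg (mul_nonneg hK (abs_nonneg (σ - 1))) hσ]
end

section
/- Let Z, Z' be standard Gaussians and φ : ℝ → ℝ odd, K̄-Lipschitz, C². Let (α_μ, α_ν) be jointly Gaussian, centered, with Var(α_μ) = σ_μ², Var(α_ν) = σ_ν² > 0 and covariance c. Then E[φ'(α_μ) φ'(α_ν)] = (E φ'(Z))² + O(|σ_μ² - 1|) + O(|σ_ν² - 1|) + O(|c|/σ_ν²), where the implicit constants depend only on K̄ and bounds on φ'' . -/
open MeasureTheory ProbabilityTheory

private lemma abs_sub_one_le {b : ℝ} (hb : 0 ≤ b) : |b - 1| ≤ |b ^ 2 - 1| := by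
  have h : b ^ 2 - 1 = (b - 1) * (b + 1) := by ring
  rw [h, abs_mul]
  have h1 : (1 : ℝ) ≤ |b + 1| := by
    rw [abs_of_nonneg (by linarith)]; linarith
  nlinarith [abs_nonneg (b - 1)]

private lemma integrable_abs_gaussian :
    Integrable (fun x : ℝ => |x|) (gaussianReal 0 1) := by
  rw [gaussianReal_of_var_ne_zero 0 one_ne_zero,
    integrable_withDensity_iff (measurable_gaussianPDF 0 1)
      (Filter.Eventually.of_forall fun x => ENNReal.ofReal_lt_top)]
  have h : ∀ x : ℝ, |x| * (gaussianPDF 0 1 x).toReal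
      = (Real.sqrt (2 * Real.pi))⁻¹ * |x * Real.exp (-(1/2) * x ^ 2)| := by
    intro x
    rw [gaussianPDF, ENNReal.toReal_ofReal (gaussianPDFReal_nonneg 0 1 x)]
    rw [gaussianPDFReal]
    rw [abs_mul, abs_of_nonneg (Real.exp_pos _).le]
    push_cast
    ring_nf
  refine Integrable.congr ?_ (Filter.Eventually.of_forall fun x => (h x).symm)
  exact ((integrable_mul_exp_neg_mul_sq (by norm_num : (0:ℝ) < 1/2)).abs).const_mul _

private lemma integrable_of_bdd {α : Type*} [MeasurableSpace α] {μ : Measure α}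
    [IsFiniteMeasure μ] {f : α → ℝ} (hm : AEStronglyMeasurable f μ) {C : ℝ}
    (h : ∀ x, |f x| ≤ C) : Integrable f μ :=
  (integrable_const C).mono' hm
    (Filter.Eventually.of_forall fun x => by simpa [Real.norm_eq_abs] using h x)

private lemma le_two_of_sq_le_two {x : ℝ} (hx : 0 < x) (h : x ^ 2 ≤ 2) : x ≤ 2 := by
  nlinarith

private lemma crude_const {K E R : ℝ} (hK : 0 ≤ K) (hE : 0 ≤ E) (hR : 1 ≤ R) :
    K * K + K * K ≤ (K ^ 2 + 1) * (5 * E + 5) * R := by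
  nlinarith [mul_nonneg hK hK, mul_nonneg (mul_nonneg hK hK) hE,
    mul_nonneg (mul_nonneg (mul_nonneg hK hK) hE) (by linarith : (0:ℝ) ≤ R)]

private lemma fine_const {K E R : ℝ} (hK : 0 ≤ K) (hE : 0 ≤ E) (hR : 0 ≤ R) :
    K * K * E * (4 * R) ≤ (K ^ 2 + 1) * (5 * E + 5) * R := by
  nlinarith [mul_nonneg hR (by positivity : (0:ℝ) ≤ K ^ 2 * E + 5 * K ^ 2 + 5 * E + 5)]

private lemma abs_int_le {α : Type*} [MeasurableSpace α] {μ : Measure α} (f : α → ℝ) :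
    |∫ x, f x ∂μ| ≤ ∫ x, |f x| ∂μ := by
  simpa [Real.norm_eq_abs] using norm_integral_le_integral_norm (μ := μ) f

private lemma abs_int_le_const {α : Type*} [MeasurableSpace α] {μ : Measure α}
    [IsProbabilityMeasure μ] {f : α → ℝ} {C : ℝ} (hm : AEStronglyMeasurable f μ)
    (h : ∀ x, |f x| ≤ C) : |∫ x, f x ∂μ| ≤ C :=
  calc |∫ x, f x ∂μ| ≤ ∫ x, |f x| ∂μ := abs_int_le f
    _ ≤ ∫ _, C ∂μ := integral_mono (integrable_of_bdd hm h).abs (integrable_const C) h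
    _ = C := by simp

/-- For a centered Gaussian pair `(α_μ, α_ν)` with variances
`σμ², σν²` (`σν > 0`) and covariance `c`, realized as
`α_ν = σν Z`, `α_μ = (c/σν) Z + √(σμ² - c²/σν²) Z'` with `Z, Z'` independent
standard Gaussians, and `φ` odd, `K̄`-Lipschitz, `C²` with `|φ''| ≤ K̄`,
`E[φ'(α_μ)φ'(α_ν)] = (Eφ'(Z))² + O(|σμ²-1|) + O(|σν²-1|) + O(|c|/σν²)`,
with a constant depending only on `K̄` (and the bound on `φ''`). -/
theorem approx_phiprime_phiprime
    (Kbar : ℝ) (φ φ' φ'' : ℝ → ℝ)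
    (hodd : ∀ x, φ (-x) = -φ x)
    (hder1 : ∀ x, HasDerivAt φ (φ' x) x)
    (hder2 : ∀ x, HasDerivAt φ' (φ'' x) x)
    (hb1 : ∀ x, |φ' x| ≤ Kbar)
    (hb2 : ∀ x, |φ'' x| ≤ Kbar) :
    ∃ K' : ℝ, 0 < K' ∧ ∀ (σμ σν c : ℝ), 0 ≤ σμ → 0 < σν →
      c ^ 2 ≤ σμ ^ 2 * σν ^ 2 →
      |(∫ z : ℝ × ℝ,
            φ' ((c / σν) * z.1 + Real.sqrt (σμ ^ 2 - c ^ 2 / σν ^ 2) * z.2)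
              * φ' (σν * z.1)
          ∂((gaussianReal 0 1).prod (gaussianReal 0 1)))
          - (∫ z, φ' z ∂(gaussianReal 0 1)) ^ 2|
        ≤ K' * (|σμ ^ 2 - 1| + |σν ^ 2 - 1| + |c| / σν ^ 2) := by
  have hK0 : 0 ≤ Kbar := (abs_nonneg _).trans (hb1 0)
  set γ := gaussianReal 0 1 with hγdef
  have hdiff : Differentiable ℝ φ' := fun x => (hder2 x).differentiableAt
  have hcont : Continuous φ' := hdiff.continuous
  -- Lipschitz bound for φ'
  have hlip : ∀ u v : ℝ, |φ' u - φ' v| ≤ Kbar * |u - v| := by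
    intro u v
    have hl : LipschitzWith Kbar.toNNReal φ' := by
      refine lipschitzWith_of_nnnorm_deriv_le hdiff fun x => ?_
      rw [(hder2 x).deriv, ← NNReal.coe_le_coe, coe_nnnorm,
        Real.coe_toNNReal _ hK0, Real.norm_eq_abs]
      exact hb2 x
    have h := hl.dist_le_mul u v
    rwa [Real.dist_eq, Real.dist_eq, Real.coe_toNNReal _ hK0] at h
  set E := ∫ x, |x| ∂γ with hEdef
  have hE0 : 0 ≤ E := integral_nonneg fun x => abs_nonneg x
  set J := ∫ x, φ' x ∂γ with hJdef
  have hJK : |J| ≤ Kbar := abs_int_le_const hcont.aestronglyMeasurable hb1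
  have hintφ : ∀ s : ℝ, Integrable (fun x => φ' (s * x)) γ := fun s =>
    integrable_of_bdd (hcont.comp (continuous_const.mul continuous_id)).aestronglyMeasurable
      fun x => hb1 _
  have hintφ0 : Integrable φ' γ := integrable_of_bdd hcont.aestronglyMeasurable hb1
  -- single-variable estimate
  have key1 : ∀ s : ℝ, |(∫ x, φ' (s * x) ∂γ) - J| ≤ Kbar * |s - 1| * E := by
    intro s
    rw [hJdef, ← integral_sub (hintφ s) hintφ0]
    calc |∫ x, (φ' (s * x) - φ' x) ∂γ| ≤ ∫ x, |φ' (s * x) - φ' x| ∂γ := abs_int_le _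
      _ ≤ ∫ x, (Kbar * |s - 1|) * |x| ∂γ := by
          refine integral_mono ((hintφ s).sub hintφ0).abs
            (integrable_abs_gaussian.const_mul _) fun x => ?_
          calc |φ' (s * x) - φ' x| ≤ Kbar * |s * x - x| := hlip _ _
            _ = Kbar * |s - 1| * |x| := by
                rw [show s * x - x = (s - 1) * x by ring, abs_mul]; ring
      _ = Kbar * |s - 1| * E := by rw [integral_const_mul, hEdef]
  have hprodE : (∫ z : ℝ × ℝ, |z.1| ∂(γ.prod γ)) = E := by
    have h := integral_prod_mul (μ := γ) (ν := γ) (fun x => |x|) (fun _ => (1 : ℝ))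
    simpa using h
  have hintabs : Integrable (fun z : ℝ × ℝ => |z.1|) (γ.prod γ) := by
    simpa using integrable_abs_gaussian.mul_prod (integrable_const (1 : ℝ))
  refine ⟨(Kbar ^ 2 + 1) * (5 * E + 5), by positivity, ?_⟩
  intro σμ σν c hσμ hσν hc2
  set A := c / σν with hAdef
  set B := Real.sqrt (σμ ^ 2 - c ^ 2 / σν ^ 2) with hBdef
  have hB0 : 0 ≤ B := Real.sqrt_nonneg _
  set R := |σμ ^ 2 - 1| + |σν ^ 2 - 1| + |c| / σν ^ 2 with hRdef
  have hcden : 0 ≤ |c| / σν ^ 2 := div_nonneg (abs_nonneg c) (by positivity)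
  have hR0 : 0 ≤ R := by positivity
  -- integrability on the product
  have hcontI : Continuous fun z : ℝ × ℝ => φ' (A * z.1 + B * z.2) * φ' (σν * z.1) :=
    (hcont.comp ((continuous_const.mul continuous_fst).add
      (continuous_const.mul continuous_snd))).mul
      (hcont.comp (continuous_const.mul continuous_fst))
  have hcontG : Continuous fun z : ℝ × ℝ => φ' (σν * z.1) * φ' (B * z.2) :=
    (hcont.comp (continuous_const.mul continuous_fst)).mul
      (hcont.comp (continuous_const.mul continuous_snd))
  have hbdd2 : ∀ u v : ℝ, |φ' u * φ' v| ≤ Kbar * Kbar := fun u v => by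
    rw [abs_mul]; exact mul_le_mul (hb1 u) (hb1 v) (abs_nonneg _) hK0
  have hintI : Integrable (fun z : ℝ × ℝ => φ' (A * z.1 + B * z.2) * φ' (σν * z.1))
      (γ.prod γ) := integrable_of_bdd hcontI.aestronglyMeasurable fun z => hbdd2 _ _
  have hintG : Integrable (fun z : ℝ × ℝ => φ' (σν * z.1) * φ' (B * z.2))
      (γ.prod γ) := integrable_of_bdd hcontG.aestronglyMeasurable fun z => hbdd2 _ _
  set I := ∫ z : ℝ × ℝ, φ' (A * z.1 + B * z.2) * φ' (σν * z.1) ∂(γ.prod γ) with hIdef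
  set G := ∫ z : ℝ × ℝ, φ' (σν * z.1) * φ' (B * z.2) ∂(γ.prod γ) with hGdef
  have hIK : |I| ≤ Kbar * Kbar :=
    abs_int_le_const hcontI.aestronglyMeasurable fun z => hbdd2 _ _
  -- step a
  have hstepa : |I - G| ≤ Kbar * Kbar * |A| * E := by
    rw [hIdef, hGdef, ← integral_sub hintI hintG]
    calc |∫ z : ℝ × ℝ, (φ' (A * z.1 + B * z.2) * φ' (σν * z.1)
            - φ' (σν * z.1) * φ' (B * z.2)) ∂(γ.prod γ)|
        ≤ ∫ z : ℝ × ℝ, |φ' (A * z.1 + B * z.2) * φ' (σν * z.1)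
            - φ' (σν * z.1) * φ' (B * z.2)| ∂(γ.prod γ) := abs_int_le _
      _ ≤ ∫ z : ℝ × ℝ, (Kbar * Kbar * |A|) * |z.1| ∂(γ.prod γ) := by
          refine integral_mono (hintI.sub hintG).abs (hintabs.const_mul _) fun z => ?_
          have h1 : |φ' (A * z.1 + B * z.2) - φ' (B * z.2)| ≤ Kbar * (|A| * |z.1|) := by
            calc |φ' (A * z.1 + B * z.2) - φ' (B * z.2)|
                ≤ Kbar * |A * z.1 + B * z.2 - B * z.2| := hlip _ _
              _ = Kbar * (|A| * |z.1|) := by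
                  rw [show A * z.1 + B * z.2 - B * z.2 = A * z.1 by ring, abs_mul]
          calc |φ' (A * z.1 + B * z.2) * φ' (σν * z.1) - φ' (σν * z.1) * φ' (B * z.2)|
              = |(φ' (A * z.1 + B * z.2) - φ' (B * z.2))| * |φ' (σν * z.1)| := by
                rw [← abs_mul]; ring_nf
            _ ≤ (Kbar * (|A| * |z.1|)) * Kbar :=
                mul_le_mul h1 (hb1 _) (abs_nonneg _) (by positivity)
            _ = (Kbar * Kbar * |A|) * |z.1| := by ring
      _ = (Kbar * Kbar * |A|) * E := by rw [integral_const_mul, hprodE]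
      _ = Kbar * Kbar * |A| * E := by ring
  -- step b: factorization
  set P := ∫ x, φ' (σν * x) ∂γ with hPdef
  set Q := ∫ x, φ' (B * x) ∂γ with hQdef
  have hGPQ : G = P * Q := by
    rw [hGdef, hPdef, hQdef]
    exact integral_prod_mul (fun x => φ' (σν * x)) (fun y => φ' (B * y))
  have hPK : |P| ≤ Kbar := abs_int_le_const
    (hcont.comp (continuous_const.mul continuous_id)).aestronglyMeasurable fun x => hb1 _
  have hPJ : |P - J| ≤ Kbar * |σν - 1| * E := key1 σν
  have hQJ : |Q - J| ≤ Kbar * |B - 1| * E := key1 B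
  -- combine
  have hGJ : |G - J ^ 2| ≤ Kbar * (Kbar * |B - 1| * E) + (Kbar * |σν - 1| * E) * Kbar := by
    have hdec : G - J ^ 2 = P * (Q - J) + (P - J) * J := by rw [hGPQ]; ring
    calc |G - J ^ 2| = |P * (Q - J) + (P - J) * J| := by rw [hdec]
      _ ≤ |P * (Q - J)| + |(P - J) * J| := abs_add_le _ _
      _ = |P| * |Q - J| + |P - J| * |J| := by rw [abs_mul, abs_mul]
      _ ≤ Kbar * (Kbar * |B - 1| * E) + (Kbar * |σν - 1| * E) * Kbar :=
          add_le_add (mul_le_mul hPK hQJ (abs_nonneg _) hK0)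
            (mul_le_mul hPJ hJK (abs_nonneg _)
              (by positivity))
  have htot : |I - J ^ 2| ≤ Kbar * Kbar * E * (|A| + |B - 1| + |σν - 1|) :=
    calc |I - J ^ 2| ≤ |I - G| + |G - J ^ 2| := abs_sub_le _ _ _
      _ ≤ Kbar * Kbar * |A| * E
          + (Kbar * (Kbar * |B - 1| * E) + (Kbar * |σν - 1| * E) * Kbar) :=
            add_le_add hstepa hGJ
      _ = Kbar * Kbar * E * (|A| + |B - 1| + |σν - 1|) := by ring
  by_cases hR : 1 ≤ R
  · -- crude bound
    have h1 : |I - J ^ 2| ≤ Kbar * Kbar + Kbar * Kbar := by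
      calc |I - J ^ 2| ≤ |I| + |J ^ 2| := abs_sub _ _
        _ ≤ Kbar * Kbar + Kbar * Kbar := by
            refine add_le_add hIK ?_
            rw [abs_pow]
            calc |J| ^ 2 ≤ Kbar ^ 2 := pow_le_pow_left₀ (abs_nonneg _) hJK 2
              _ = Kbar * Kbar := sq Kbar
    have h2 : Kbar * Kbar + Kbar * Kbar ≤ (Kbar ^ 2 + 1) * (5 * E + 5) * R :=
      crude_const hK0 hE0 hR
    exact h1.trans h2
  · push_neg at hR
    have habs2 : |σν ^ 2 - 1| ≤ R := by
      rw [hRdef]; linarith [abs_nonneg (σμ ^ 2 - 1), hcden]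
    have habs3 : |c| / σν ^ 2 ≤ R := by
      rw [hRdef]; linarith [abs_nonneg (σμ ^ 2 - 1), abs_nonneg (σν ^ 2 - 1)]
    have hσν2 : σν ^ 2 ≤ 2 := by
      have := habs2.trans_lt hR
      have := abs_lt.mp this
      linarith [this.2]
    have hσνle : σν ≤ 2 := le_two_of_sq_le_two hσν hσν2
    -- |A| ≤ 2 * (|c|/σν²)
    have hA : |A| ≤ 2 * (|c| / σν ^ 2) := by
      have hAeq : |A| = (|c| / σν ^ 2) * σν := by
        rw [hAdef, abs_div, abs_of_pos hσν]
        field_simp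
      rw [hAeq]
      calc (|c| / σν ^ 2) * σν ≤ (|c| / σν ^ 2) * 2 :=
          mul_le_mul_of_nonneg_left hσνle hcden
        _ = 2 * (|c| / σν ^ 2) := by ring
    -- |c| ≤ 2
    have hcle : |c| ≤ 2 := by
      have h1 : |c| / σν ^ 2 ≤ 1 := (habs3.trans_lt hR).le
      have h2 : |c| ≤ σν ^ 2 := by
        rwa [div_le_one (by positivity)] at h1
      linarith
    -- B bounds
    have hnn : 0 ≤ σμ ^ 2 - c ^ 2 / σν ^ 2 := by
      rw [sub_nonneg, div_le_iff₀ (by positivity : (0:ℝ) < σν ^ 2)]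
      exact hc2
    have hBsq : B ^ 2 = σμ ^ 2 - c ^ 2 / σν ^ 2 := Real.sq_sqrt hnn
    have hcsq : c ^ 2 / σν ^ 2 ≤ 2 * (|c| / σν ^ 2) := by
      have heq : c ^ 2 / σν ^ 2 = (|c| / σν ^ 2) * |c| := by
        rw [← sq_abs]; ring
      rw [heq]
      calc (|c| / σν ^ 2) * |c| ≤ (|c| / σν ^ 2) * 2 :=
          mul_le_mul_of_nonneg_left hcle hcden
        _ = 2 * (|c| / σν ^ 2) := by ring
    have hB1 : |B - 1| ≤ |σμ ^ 2 - 1| + 2 * (|c| / σν ^ 2) := by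
      calc |B - 1| ≤ |B ^ 2 - 1| := abs_sub_one_le hB0
        _ = |(σμ ^ 2 - 1) + (-(c ^ 2 / σν ^ 2))| := by rw [hBsq]; ring_nf
        _ ≤ |σμ ^ 2 - 1| + |(-(c ^ 2 / σν ^ 2))| := abs_add_le _ _
        _ = |σμ ^ 2 - 1| + c ^ 2 / σν ^ 2 := by
            rw [abs_neg, abs_of_nonneg (by positivity : (0:ℝ) ≤ c ^ 2 / σν ^ 2)]
        _ ≤ |σμ ^ 2 - 1| + 2 * (|c| / σν ^ 2) := by linarith
    have hs1 : |σν - 1| ≤ |σν ^ 2 - 1| := abs_sub_one_le hσν.le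
    have hsum : |A| + |B - 1| + |σν - 1| ≤ 4 * R := by
      rw [hRdef]
      have := abs_nonneg (σμ ^ 2 - 1)
      have := abs_nonneg (σν ^ 2 - 1)
      linarith
    calc |I - J ^ 2| ≤ Kbar * Kbar * E * (|A| + |B - 1| + |σν - 1|) := htot
      _ ≤ Kbar * Kbar * E * (4 * R) := by
          exact mul_le_mul_of_nonneg_left hsum (by positivity)
      _ ≤ (Kbar ^ 2 + 1) * (5 * E + 5) * R := fine_const hK0 hE0 hR0
end
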